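/- Consider the reference update rule: for each κ, set x_i^ref[κ|k] = x_i*[κ|k-1] if conditions (h_i(x) ≤ 0 for all x ∈ x_i*[κ|k-1] ⊕ C_i) and (c_{ij}(x_i, x_j) ≤ 0 for all x_i ∈ x_i*[κ|k-1] ⊕ C_i and all x_j ∈ (x_j*[κ|k-1] ⊕ C_j) ∪ (x_j^ref[κ|k-1] ⊕ C_j), for all neighbors j) hold; otherwise set x_i^ref[κ|k] = x_i^ref[κ|k-1]. If at time k-1 the references satisfied h_i(x) ≤ 0 for all x ∈ x_i^ref[κ|k-1] ⊕ C_i and c_{ij}(x_i, x_j) ≤ 0 for all x_i ∈ x_i^ref[κ|k-1] ⊕ C_i, x_j ∈ x_j^ref[κ|k-1] ⊕ C_j, then the updated references satisfy the same conditions at time k: h_i(x) ≤ 0 for all x ∈ x_i^ref[κ|k] ⊕ C_i, and c_{ij}(x_i, x_j) ≤ 0 for all x_i ∈ x_i^ref[κ|k] ⊕ C_i and x_j ∈ x_j^ref[κ|k] ⊕ C_j, for every pair of neighbors i, j. -/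

import Mathlib

open Pointwise

/-! Each new reference is either the old one or, when the update condition holds, the new
candidate `xstar i`. The local constraint then holds in both cases. For a pair of neighbours
the only case not covered directly by a hypothesis is an old reference `i` next to an updated
`j`; it is covered by `j`'s update condition, which also checks the candidate of `j` against
the old reference of `i`, together with the symmetry of the coupling constraint. -/

section ReferenceUpdate

variable {V : Type} {X : V → Type*} {cond : V → Prop} {star old new : ∀ i, X i}

theorem update_eq_star_or_eq_old
    (hupd : ∀ i, (cond i → new i = star i) ∧ (¬ cond i → new i = old i)) (i : V) :
    cond i ∧ new i = star i ∨ new i = old i := by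
  by_cases hi : cond i
  · exact .inl ⟨hi, (hupd i).1 hi⟩
  · exact .inr ((hupd i).2 hi)

theorem update_preserves_local {Q : ∀ i, X i → Prop}
    (hupd : ∀ i, (cond i → new i = star i) ∧ (¬ cond i → new i = old i))
    (hstar : ∀ i, cond i → Q i (star i)) (hold : ∀ i, Q i (old i)) (i : V) :
    Q i (new i) := by
  rcases update_eq_star_or_eq_old hupd i with ⟨hi, he⟩ | he <;> rw [he]
  exacts [hstar i hi, hold i]

theorem update_preserves_pairwise {Nbr : V → V → Prop} {P : ∀ i j, X i → X j → Prop}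
    (hupd : ∀ i, (cond i → new i = star i) ∧ (¬ cond i → new i = old i))
    (hNbr : ∀ i j, Nbr i j → Nbr j i) (hP : ∀ i j a b, P i j a b → P j i b a)
    (hstar : ∀ i j, cond i → Nbr i j → P i j (star i) (star j) ∧ P i j (star i) (old j))
    (hold : ∀ i j, Nbr i j → P i j (old i) (old j)) :
    ∀ i j, Nbr i j → P i j (new i) (new j) := by
  intro i j hij
  rcases update_eq_star_or_eq_old hupd i with ⟨hi, hei⟩ | hei <;>
    rcases update_eq_star_or_eq_old hupd j with ⟨hj, hej⟩ | hej <;> rw [hei, hej]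
  · exact (hstar i j hi hij).1
  · exact (hstar i j hi hij).2
  · exact hP _ _ _ _ (hstar j i hj (hNbr i j hij)).2
  · exact hold i j hij

end ReferenceUpdate

theorem stmt_8_general (V : Type)
    (n p : V → ℕ) (q : ℕ)
    (Nbr : V → V → Prop) (hNbr : ∀ i j, Nbr i j → Nbr j i)
    (h : ∀ i, (Fin (n i) → ℝ) → (Fin (p i) → ℝ))
    (C : ∀ i, Set (Fin (n i) → ℝ))
    (c : ∀ i j, (Fin (n i) → ℝ) → (Fin (n j) → ℝ) → (Fin q → ℝ))
    (hcsym : ∀ i j xi xj, c i j xi xj = c j i xj xi)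
    (xstar refold refnew : ∀ i, Fin (n i) → ℝ)
    -- the per-subsystem update condition
    (cond : V → Prop)
    (hcond : ∀ i, cond i ↔
      ((∀ x ∈ (xstar i) +ᵥ C i, h i x ≤ 0) ∧
        ∀ j, Nbr i j → ∀ xi ∈ (xstar i) +ᵥ C i,
          ∀ xj ∈ ((xstar j) +ᵥ C j) ∪ ((refold j) +ᵥ C j), c i j xi xj ≤ 0))
    -- the update rule applied in parallel by each subsystem
    (hupd : ∀ i, (cond i → refnew i = xstar i) ∧ (¬ cond i → refnew i = refold i))
    -- the references satisfied the conditions at the previous time step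
    (holdh : ∀ i, ∀ x ∈ (refold i) +ᵥ C i, h i x ≤ 0)
    (holdc : ∀ i j, Nbr i j → ∀ xi ∈ (refold i) +ᵥ C i,
      ∀ xj ∈ (refold j) +ᵥ C j, c i j xi xj ≤ 0) :
    (∀ i, ∀ x ∈ (refnew i) +ᵥ C i, h i x ≤ 0) ∧
      (∀ i j, Nbr i j → ∀ xi ∈ (refnew i) +ᵥ C i,
        ∀ xj ∈ (refnew j) +ᵥ C j, c i j xi xj ≤ 0) := by
  refine ⟨update_preserves_local (Q := fun i a => ∀ x ∈ a +ᵥ C i, h i x ≤ 0) hupd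
      (fun i hi => ((hcond i).1 hi).1) holdh,
    update_preserves_pairwise
      (P := fun i j a b => ∀ xi ∈ a +ᵥ C i, ∀ xj ∈ b +ᵥ C j, c i j xi xj ≤ 0)
      hupd hNbr ?_ ?_ holdc⟩
  · intro i j a b hab xj hxj xi hxi
    rw [hcsym]
    exact hab xi hxi xj hxj
  · intro i j hi hij
    have hcoupled := ((hcond i).1 hi).2 j hij
    exact ⟨fun xi hxi xj hxj => hcoupled xi hxi xj (.inl hxj),
      fun xi hxi xj hxj => hcoupled xi hxi xj (.inr hxj)⟩

/-- The parallel reference update rule preserves satisfaction of the local state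
constraints and the coupled state constraints on the translated reference sets. -/
theorem stmt_8 (V : Type) [Fintype V]
    (n p : V → ℕ) (q : ℕ)
    (Nbr : V → V → Prop) (hNbr : ∀ i j, Nbr i j → Nbr j i)
    (h : ∀ i, (Fin (n i) → ℝ) → (Fin (p i) → ℝ))
    (C : ∀ i, Set (Fin (n i) → ℝ))
    (c : ∀ i j, (Fin (n i) → ℝ) → (Fin (n j) → ℝ) → (Fin q → ℝ))
    (hcsym : ∀ i j xi xj, c i j xi xj = c j i xj xi)
    (xstar refold refnew : ∀ i, Fin (n i) → ℝ)
    -- the per-subsystem update condition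
    (cond : V → Prop)
    (hcond : ∀ i, cond i ↔
      ((∀ x ∈ (xstar i) +ᵥ C i, h i x ≤ 0) ∧
        ∀ j, Nbr i j → ∀ xi ∈ (xstar i) +ᵥ C i,
          ∀ xj ∈ ((xstar j) +ᵥ C j) ∪ ((refold j) +ᵥ C j), c i j xi xj ≤ 0))
    -- the update rule applied in parallel by each subsystem
    (hupd : ∀ i, (cond i → refnew i = xstar i) ∧ (¬ cond i → refnew i = refold i))
    -- the references satisfied the conditions at the previous time step
    (holdh : ∀ i, ∀ x ∈ (refold i) +ᵥ C i, h i x ≤ 0)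
    (holdc : ∀ i j, Nbr i j → ∀ xi ∈ (refold i) +ᵥ C i,
      ∀ xj ∈ (refold j) +ᵥ C j, c i j xi xj ≤ 0) :
    (∀ i, ∀ x ∈ (refnew i) +ᵥ C i, h i x ≤ 0) ∧
      (∀ i j, Nbr i j → ∀ xi ∈ (refnew i) +ᵥ C i,
        ∀ xj ∈ (refnew j) +ᵥ C j, c i j xi xj ≤ 0) :=
  stmt_8_general V n p q Nbr hNbr h C c hcsym xstar refold refnew cond hcond hupd holdh holdc
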